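/- With δ_1 = ∂_x + x∂_y and δ_2 = ∂_y acting on the algebra A_{a,b} = K[x,y]/(x^k y^m : m > a or k + m > b), b ≥ 2a ≥ 2: for each 0 ≤ l ≤ a, the K-linear span of the operators {δ_1^{a+b−l−2s} δ_2^s : 0 ≤ s ≤ a} has dimension exactly l + 1, and the operators δ_1^{a+b−l−2s} δ_2^s for a − l ≤ s ≤ a form a basis of this span. -/

import Mathlib

/-!
Write `δ₁ = A + B` with `A = x ∂_y`, `B = ∂_x`. Then `B A = A B + C` for `C = ∂_y = δ₂`, and `C`
commutes with `A` and `B`. In this situation the homogenised Hermite polynomial `H_n(δ₁, δ₂)`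
(`H_{n+2} = δ₁ H_{n+1} - (n+1) H_n δ₂`) is the normally ordered power
`∑ C(n,i) A^(n-i) B^i = ∑ C(n,i) x^(n-i) ∂_y^(n-i) ∂_x^i`, which kills every polynomial of
degree `< n`. On `A_{a,b}`, `δ₂^s` lowers degrees to at most `b - s`, so
`H_{b+1-s}(δ₁, δ₂) δ₂^s = 0`; multiplied by `δ₁^(a-l-s-1)` this writes `δ₁^(a+b-l-2s) δ₂^s`
through the operators with larger `s`, and `δ₂^(a+1) = 0`. For independence, the operator with
index `s` sends `x^(b-i) y^i` to `0` when `s > i` and to a nonzero multiple of `x^(l+i-a)` when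
`s = i`.

The operators `D₁, D₂` on the quotient are compared with `δ₁, δ₂` through the span `V` of the
surviving monomials, which is stable under `∂_x, ∂_y, x ∂_y` and maps onto `A_{a,b}`: the pairs
`(F, G)` with `F V ⊆ V` and `G ∘ π = π ∘ F` on `V` form a subalgebra, so identities between the
`δ`s that hold on `V` pass to `D₁, D₂`.
-/

open MvPolynomial

local notation "∂ₓ" => Derivation.toLinearMap (pderiv (0 : Fin 2))
local notation "∂ᵧ" => Derivation.toLinearMap (pderiv (1 : Fin 2))

section Hermite

open Finset

variable {R : Type*} [Ring R]

/-- For commuting `d₁, d₂` this is `∑ (-1)^i n! / (i! (n-2i)! 2^i) d₁^(n-2i) d₂^i`, the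
probabilists' Hermite polynomial `He_n(d₁)` homogenised with `d₂` as the variance. -/
def hermiteOp (d₁ d₂ : R) : ℕ → R
  | 0 => 1
  | 1 => d₁
  | n + 2 => d₁ * hermiteOp d₁ d₂ (n + 1) - (n + 1) • (hermiteOp d₁ d₂ n * d₂)

theorem map_hermiteOp {R' : Type*} [Ring R'] (f : R →+* R') (d₁ d₂ : R) (n : ℕ) :
    f (hermiteOp d₁ d₂ n) = hermiteOp (f d₁) (f d₂) n := by
  induction n using Nat.twoStepInduction with
  | zero => exact map_one f
  | one => rfl
  | more n ih₀ ih₁ => simp only [hermiteOp, map_sub, map_mul, map_nsmul, ih₀, ih₁]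

theorem hermiteOp_mem {S : Type*} [SetLike S R] [SubringClass S R] {s : S} {d₁ d₂ : R}
    (h₁ : d₁ ∈ s) (h₂ : d₂ ∈ s) (n : ℕ) : hermiteOp d₁ d₂ n ∈ s := by
  have hmap := map_hermiteOp (SubringClass.subtype s) ⟨d₁, h₁⟩ ⟨d₂, h₂⟩ n
  rw [SubringClass.coe_subtype] at hmap
  exact hmap ▸ (hermiteOp (⟨d₁, h₁⟩ : s) ⟨d₂, h₂⟩ n).2

theorem hermiteOp_prod {R' : Type*} [Ring R'] (d₁ d₂ : R × R') (n : ℕ) :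
    hermiteOp d₁ d₂ n = (hermiteOp d₁.1 d₂.1 n, hermiteOp d₁.2 d₂.2 n) :=
  Prod.ext (map_hermiteOp (RingHom.fst R R') d₁ d₂ n) (map_hermiteOp (RingHom.snd R R') d₁ d₂ n)

/-- The outer factors `d₁ ^ q`, `d₂ ^ s` let the induction run without `d₁ d₂ = d₂ d₁`. -/
theorem pow_mul_hermiteOp_mul_pow_sub_mem_span (S : Type*) [Ring S] [Module S R]
    (d₁ d₂ : R) (n : ℕ) :
    ∀ q s : ℕ, d₁ ^ q * hermiteOp d₁ d₂ n * d₂ ^ s - d₁ ^ (q + n) * d₂ ^ s ∈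
      Submodule.span S (Set.range fun i => d₁ ^ (q + n - 2 * (i + 1)) * d₂ ^ (s + (i + 1))) := by
  induction n using Nat.twoStepInduction with
  | zero => intro q s; simp [hermiteOp]
  | one => intro q s; simp [hermiteOp, pow_succ]
  | more n ih₀ ih₁ =>
    intro q s
    have hsplit : d₁ ^ q * hermiteOp d₁ d₂ (n + 2) * d₂ ^ s - d₁ ^ (q + (n + 2)) * d₂ ^ s =
        (d₁ ^ (q + 1) * hermiteOp d₁ d₂ (n + 1) * d₂ ^ s - d₁ ^ (q + 1 + (n + 1)) * d₂ ^ s)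
          - (n + 1) • (d₁ ^ q * hermiteOp d₁ d₂ n * d₂ ^ (s + 1) - d₁ ^ (q + n) * d₂ ^ (s + 1))
          - (n + 1) • (d₁ ^ (q + n) * d₂ ^ (s + 1)) := by
      rw [show q + 1 + (n + 1) = q + (n + 2) by omega, pow_succ d₁ q, pow_succ' d₂ s]
      simp only [hermiteOp, mul_sub, sub_mul, mul_smul_comm, smul_mul_assoc, mul_assoc, smul_sub]
      abel
    rw [hsplit]
    refine sub_mem (sub_mem ?_ (nsmul_mem ?_ _))
      (nsmul_mem (Submodule.subset_span (Set.mem_range.mpr ⟨0, ?_⟩)) _)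
    · simpa only [show q + 1 + (n + 1) = q + (n + 2) by omega] using ih₁ (q + 1) s
    · refine Submodule.span_mono ?_ (ih₀ q (s + 1))
      rintro _ ⟨i, rfl⟩
      refine ⟨i + 1, ?_⟩
      dsimp only
      rw [show q + (n + 2) - 2 * (i + 1 + 1) = q + n - 2 * (i + 1) by omega,
        show s + (i + 1 + 1) = s + 1 + (i + 1) by omega]
    · rw [show q + (n + 2) - 2 * (0 + 1) = q + n by omega]

theorem pow_mul_pow_mem_span_of_hermiteOp_mul_pow_eq_zero (S : Type*) [Ring S] [Module S R]
    {d₁ d₂ : R} {a b l : ℕ} (hab : a ≤ b) (hnil : d₂ ^ (a + 1) = 0)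
    (hH : ∀ s ≤ a, hermiteOp d₁ d₂ (b + 1 - s) * d₂ ^ s = 0) (s : ℕ) :
    d₁ ^ (a + b - l - 2 * s) * d₂ ^ s ∈ Submodule.span S
      (Set.range fun t : Set.Icc (a - l) a => d₁ ^ (a + b - l - 2 * (t : ℕ)) * d₂ ^ (t : ℕ)) := by
  induction hk : a - s using Nat.strong_induction_on generalizing s with
  | _ k ih =>
  subst hk
  by_cases has : a < s
  · rw [← Nat.add_sub_of_le has, pow_add, hnil, zero_mul, mul_zero]
    exact zero_mem _
  by_cases hls : a - l ≤ s
  · exact Submodule.subset_span ⟨⟨s, hls, not_lt.mp has⟩, rfl⟩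
  have hrel := pow_mul_hermiteOp_mul_pow_sub_mem_span S d₁ d₂ (b + 1 - s) (a - l - s - 1) s
  rw [mul_assoc, hH s (by omega), mul_zero, zero_sub, neg_mem_iff,
    show a - l - s - 1 + (b + 1 - s) = a + b - l - 2 * s by omega] at hrel
  refine Submodule.span_le.mpr ?_ hrel
  rintro _ ⟨i, rfl⟩
  dsimp only
  rw [show a + b - l - 2 * s - 2 * (i + 1) = a + b - l - 2 * (s + (i + 1)) by omega]
  exact ih _ (by omega) _ rfl

def normalOrderedPow (A B : R) (n : ℕ) : R :=
  ∑ i ∈ range (n + 1), n.choose i • (A ^ (n - i) * B ^ i)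

theorem normalOrderedPow_zero (A B : R) : normalOrderedPow A B 0 = 1 := by
  simp [normalOrderedPow]

theorem normalOrderedPow_succ (A B : R) (n : ℕ) :
    normalOrderedPow A B (n + 1) = A * normalOrderedPow A B n + normalOrderedPow A B n * B := by
  rw [normalOrderedPow, normalOrderedPow, sum_choose_succ_nsmul (fun i j => A ^ j * B ^ i),
    mul_sum, sum_mul]
  congr 1 <;> refine sum_congr rfl fun i hi => ?_
  · rw [mul_smul_comm, ← mul_assoc, ← pow_succ', Nat.sub_add_comm (mem_range_succ_iff.mp hi)]
  · rw [smul_mul_assoc, mul_assoc, ← pow_succ]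

theorem Commute.normalOrderedPow_right {A B C : R} (hA : Commute C A) (hB : Commute C B) (n : ℕ) :
    Commute C (normalOrderedPow A B n) :=
  Commute.sum_right _ _ _ fun _ _ => ((hA.pow_right _).mul_right (hB.pow_right _)).smul_right _

section Weyl

variable {A B C : R} (hBA : B * A = A * B + C) (hA : Commute C A) (hB : Commute C B)
include hBA hA hB

theorem mul_normalOrderedPow_succ (n : ℕ) :
    B * normalOrderedPow A B (n + 1) =
      normalOrderedPow A B (n + 1) * B + (n + 1) • (normalOrderedPow A B n * C) := by
  induction n with
  | zero =>
    simp only [normalOrderedPow_succ, normalOrderedPow_zero, mul_one, one_mul, zero_add, one_smul,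
      mul_add, add_mul, hBA]
    abel
  | succ n ih =>
    set P := normalOrderedPow A B n
    set P₁ := normalOrderedPow A B (n + 1)
    have hP₁ : P₁ = A * P + P * B := normalOrderedPow_succ A B n
    calc B * normalOrderedPow A B (n + 2)
        = A * (B * P₁) + C * P₁ + (B * P₁) * B := by
          rw [normalOrderedPow_succ, mul_add, ← mul_assoc, hBA, add_mul, mul_assoc, mul_assoc]
      _ = (A * P₁ + P₁ * B) * B + (n + 1) • ((A * P + P * B) * C) + P₁ * C := by
          rw [ih, (hA.normalOrderedPow_right hB (n + 1) : Commute C P₁).eq, mul_add, mul_smul_comm,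
            add_mul, smul_mul_assoc, mul_assoc P C B, hB.eq]
          simp only [mul_assoc, add_mul, smul_add]
          abel
      _ = normalOrderedPow A B (n + 2) * B + (n + 1 + 1) • (P₁ * C) := by
          rw [← hP₁, ← normalOrderedPow_succ, succ_nsmul _ (n + 1), add_assoc]

theorem hermiteOp_add_eq_normalOrderedPow (n : ℕ) :
    hermiteOp (A + B) C n = normalOrderedPow A B n := by
  induction n using Nat.twoStepInduction with
  | zero => exact (normalOrderedPow_zero A B).symm
  | one => simp [hermiteOp, normalOrderedPow_succ, normalOrderedPow_zero]
  | more n ih₀ ih₁ =>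
    rw [hermiteOp, ih₀, ih₁, add_mul, mul_normalOrderedPow_succ hBA hA hB,
      normalOrderedPow_succ A B (n + 1)]
    abel

end Weyl

end Hermite

theorem linearIndependent_of_apply_eq_zero_of_lt {R M N ι : Type*} [DivisionRing R]
    [AddCommGroup M] [Module R M] [AddCommGroup N] [Module R N] [LinearOrder ι]
    {v : ι → M} (f : ι → M →ₗ[R] N) (hlt : ∀ i j, i < j → f i (v j) = 0)
    (hne : ∀ i, f i (v i) ≠ 0) : LinearIndependent R v := by
  classical
  rw [linearIndependent_iff']
  intro s g hsum i hi
  by_contra hgi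
  set T := s.filter fun j => g j ≠ 0
  have hT : T.Nonempty := ⟨i, Finset.mem_filter.mpr ⟨hi, hgi⟩⟩
  set i₀ := T.min' hT
  obtain ⟨hi₀, hgi₀⟩ := Finset.mem_filter.mp (T.min'_mem hT)
  have hsum₀ := congrArg (f i₀) hsum
  rw [map_sum, map_zero, Finset.sum_eq_single_of_mem i₀ hi₀ fun j hj hji₀ => ?_, map_smul]
    at hsum₀
  · exact hgi₀ ((smul_eq_zero.mp hsum₀).resolve_right (hne i₀))
  rcases hji₀.lt_or_gt with hji | hij
  · have hgj : g j = 0 :=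
      by_contra fun h => (T.min'_le j (Finset.mem_filter.mpr ⟨hj, h⟩)).not_gt hji
    rw [hgj, zero_smul, map_zero]
  · rw [map_smul, hlt _ _ hij, smul_zero]

section Intertwiners

variable {R M N : Type*} [CommRing R] [AddCommGroup M] [Module R M] [AddCommGroup N] [Module R N]

def intertwiners (π : M →ₗ[R] N) (V : Submodule R M) :
    Subalgebra R (Module.End R M × Module.End R N) where
  carrier := {FG | ∀ p ∈ V, FG.1 p ∈ V ∧ FG.2 (π p) = π (FG.1 p)}
  mul_mem' {FG FG'} h h' p hp := by
    obtain ⟨hp', he'⟩ := h' p hp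
    obtain ⟨hp'', he''⟩ := h _ hp'
    exact ⟨hp'', by simp only [Prod.fst_mul, Prod.snd_mul, Module.End.mul_apply, he', he'']⟩
  add_mem' {FG FG'} h h' p hp := by
    obtain ⟨hp₁, he₁⟩ := h p hp
    obtain ⟨hp₂, he₂⟩ := h' p hp
    exact ⟨V.add_mem hp₁ hp₂,
      by simp only [Prod.fst_add, Prod.snd_add, LinearMap.add_apply, he₁, he₂, map_add]⟩
  algebraMap_mem' r p hp := ⟨by simpa using V.smul_mem r hp, by simp⟩

variable {π : M →ₗ[R] N} {V : Submodule R M}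

theorem apply_eq_of_mem_intertwiners {F : Module.End R M} {G : Module.End R N}
    (h : (F, G) ∈ intertwiners π V) {p : M} (hp : p ∈ V) : G (π p) = π (F p) :=
  (h p hp).2

theorem mem_intertwiners_span {S : Set M} {F : Module.End R M} {G : Module.End R N}
    (h : ∀ p ∈ S, F p ∈ Submodule.span R S ∧ G (π p) = π (F p)) :
    (F, G) ∈ intertwiners π (Submodule.span R S) := by
  intro p hp
  induction hp using Submodule.span_induction with
  | mem p hp => exact h p hp
  | zero => simp
  | add p q _ _ hp hq =>
    exact ⟨by rw [map_add]; exact add_mem hp.1 hq.1, by simp only [map_add, hp.2, hq.2]⟩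
  | smul r p _ hp =>
    exact ⟨by rw [map_smul]; exact Submodule.smul_mem _ r hp.1, by simp only [map_smul, hp.2]⟩

theorem eq_zero_of_mem_intertwiners (hV : V.map π = ⊤) {F : Module.End R M} {G : Module.End R N}
    (h : (F, G) ∈ intertwiners π V) (hF : V ≤ LinearMap.ker F) : G = 0 := by
  ext n
  obtain ⟨p, hp, rfl⟩ := (Submodule.mem_map.mp (hV ▸ Submodule.mem_top : n ∈ V.map π))
  rw [apply_eq_of_mem_intertwiners h hp, LinearMap.mem_ker.mp (hF hp), map_zero,
    LinearMap.zero_apply]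

end Intertwiners

section PDeriv

variable {K σ : Type*} [CommRing K]

theorem pderiv_pow_X_pow_mul (i : σ) {q : MvPolynomial σ K} (hq : pderiv i q = 0) (k n : ℕ) :
    ((pderiv i).toLinearMap ^ n) (X i ^ k * q) =
      (k.descFactorial n : K) • (X i ^ (k - n) * q) := by
  induction n with
  | zero => simp
  | succ n ih =>
    rw [pow_succ', Module.End.mul_apply, ih, map_smul, Derivation.coeFn_coe, pderiv_mul,
      pderiv_pow, pderiv_X_self, hq, mul_zero, add_zero, mul_one, Nat.descFactorial_succ,
      Nat.sub_sub, Nat.cast_mul, mul_comm _ (k.descFactorial n : K), mul_smul, ← C_eq_coe_nat,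
      ← smul_eq_C_mul, smul_mul_assoc]

theorem pderiv_pderiv_comm (i j : σ) (f : MvPolynomial σ K) :
    pderiv i (pderiv j f) = pderiv j (pderiv i f) := by
  have : ⁅pderiv i, pderiv j⁆ = (0 : Derivation K (MvPolynomial σ K) (MvPolynomial σ K)) :=
    derivation_ext fun l => by
      classical
      rw [Derivation.commutator_apply, pderiv_X, pderiv_X, Pi.single_apply, Pi.single_apply]
      split_ifs <;> simp
  exact sub_eq_zero.mp (by rw [← Derivation.commutator_apply, this, Derivation.zero_apply])

end PDeriv

noncomputable section Plane

variable {K : Type*} [CommRing K]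

def xDerivY : Module.End K (MvPolynomial (Fin 2) K) :=
  LinearMap.mulLeft K (X 0) ∘ₗ (∂ᵧ : Module.End K (MvPolynomial (Fin 2) K))

theorem xDerivY_apply (f : MvPolynomial (Fin 2) K) : xDerivY f = X 0 * pderiv 1 f := rfl

theorem pderiv_one_X_zero_pow (k : ℕ) : pderiv 1 (X 0 ^ k : MvPolynomial (Fin 2) K) = 0 := by
  rw [pderiv_pow, pderiv_X_of_ne (by decide), mul_zero]

theorem pderiv_zero_X_one_pow (m : ℕ) : pderiv 0 (X 1 ^ m : MvPolynomial (Fin 2) K) = 0 := by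
  rw [pderiv_pow, pderiv_X_of_ne (by decide), mul_zero]

theorem pderiv_zero_X_pow_mul_X_pow (k m : ℕ) :
    pderiv 0 (X 0 ^ k * X 1 ^ m : MvPolynomial (Fin 2) K) =
      (k : K) • (X 0 ^ (k - 1) * X 1 ^ m) := by
  simpa using pderiv_pow_X_pow_mul (K := K) (0 : Fin 2) (pderiv_zero_X_one_pow m) k 1

theorem pderiv_one_pow_X_pow_mul_X_pow (j k m : ℕ) :
    ((∂ᵧ : Module.End K (MvPolynomial (Fin 2) K)) ^ j) (X 0 ^ k * X 1 ^ m) =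
      (m.descFactorial j : K) • (X 0 ^ k * X 1 ^ (m - j)) := by
  rw [mul_comm, pderiv_pow_X_pow_mul 1 (pderiv_one_X_zero_pow k), mul_comm]

theorem pderiv_one_X_pow_mul_X_pow (k m : ℕ) :
    pderiv 1 (X 0 ^ k * X 1 ^ m : MvPolynomial (Fin 2) K) =
      (m : K) • (X 0 ^ k * X 1 ^ (m - 1)) := by
  simpa using pderiv_one_pow_X_pow_mul_X_pow (K := K) 1 k m

theorem pderiv_zero_mul_xDerivY :
    (∂ₓ : Module.End K (MvPolynomial (Fin 2) K)) * xDerivY = xDerivY * ∂ₓ + ∂ᵧ := by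
  refine LinearMap.ext fun f => ?_
  simp only [Module.End.mul_apply, LinearMap.add_apply, Derivation.coeFn_coe, xDerivY_apply,
    pderiv_mul, pderiv_X_self, one_mul, pderiv_pderiv_comm 0 1 f]
  abel

theorem commute_pderiv_one_pderiv_zero :
    Commute (∂ᵧ : Module.End K (MvPolynomial (Fin 2) K)) ∂ₓ :=
  LinearMap.ext fun f => pderiv_pderiv_comm 1 0 f

theorem commute_pderiv_one_xDerivY :
    Commute (∂ᵧ : Module.End K (MvPolynomial (Fin 2) K)) xDerivY := by
  refine LinearMap.ext fun f => ?_
  simp only [Module.End.mul_apply, Derivation.coeFn_coe, xDerivY_apply, pderiv_mul,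
    pderiv_X_of_ne (show (0 : Fin 2) ≠ 1 by decide), zero_mul, zero_add]

theorem xDerivY_pow_apply (j : ℕ) (f : MvPolynomial (Fin 2) K) :
    (xDerivY ^ j) f = X 0 ^ j * ((∂ᵧ : Module.End K (MvPolynomial (Fin 2) K)) ^ j) f := by
  induction j generalizing f with
  | zero => simp
  | succ j ih =>
    rw [pow_succ', Module.End.mul_apply, ih, xDerivY_apply, pderiv_mul, pderiv_one_X_zero_pow,
      zero_mul, zero_add, ← mul_assoc, ← pow_succ', pow_succ' (∂ᵧ : Module.End K _) j,
      Module.End.mul_apply, Derivation.coeFn_coe]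

theorem normalOrderedPow_xDerivY_pderiv_apply_eq_zero {k m n : ℕ} (h : k + m < n) :
    normalOrderedPow xDerivY (∂ₓ : Module.End K (MvPolynomial (Fin 2) K)) n
      (X 0 ^ k * X 1 ^ m) = 0 := by
  rw [normalOrderedPow, LinearMap.sum_apply]
  refine Finset.sum_eq_zero fun i _ => ?_
  rw [LinearMap.smul_apply, Module.End.mul_apply,
    pderiv_pow_X_pow_mul 0 (pderiv_zero_X_one_pow m)]
  rcases le_or_gt i k with hik | hki
  · rw [map_smul, xDerivY_pow_apply, mul_comm (X 0 ^ (k - i)),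
      pderiv_pow_X_pow_mul 1 (pderiv_one_X_zero_pow _),
      Nat.descFactorial_eq_zero_iff_lt.mpr (show m < n - i by omega), Nat.cast_zero, zero_smul,
      mul_zero, smul_zero, smul_zero]
  · rw [Nat.descFactorial_eq_zero_iff_lt.mpr hki, Nat.cast_zero, zero_smul, map_zero, smul_zero]

theorem xDerivY_add_pderiv_pow_X_pow (M p : ℕ) :
    ((xDerivY + ∂ₓ : Module.End K (MvPolynomial (Fin 2) K)) ^ M) (X 0 ^ p) =
      (p.descFactorial M : K) • X 0 ^ (p - M) := by
  induction M with
  | zero => simp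
  | succ M ih =>
    have hderiv := pderiv_zero_X_pow_mul_X_pow (K := K) (p - M) 0
    rw [pow_zero, mul_one, mul_one] at hderiv
    rw [pow_succ', Module.End.mul_apply, ih, map_smul, LinearMap.add_apply, xDerivY_apply,
      pderiv_one_X_zero_pow, mul_zero, zero_add, Derivation.coeFn_coe, hderiv, smul_smul,
      Nat.descFactorial_succ, Nat.cast_mul, Nat.sub_sub, mul_comm]

end Plane

noncomputable section MonomialSpan

variable {K : Type*} [CommRing K]

variable (K) in
def monomialSpan (a b : ℕ) : Submodule K (MvPolynomial (Fin 2) K) :=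
  Submodule.span K {p | ∃ k m : ℕ, m ≤ a ∧ k + m ≤ b ∧ p = X 0 ^ k * X 1 ^ m}

theorem X_pow_mul_X_pow_mem_monomialSpan {a b k m : ℕ} (hm : m ≤ a) (hkm : k + m ≤ b) :
    X 0 ^ k * X 1 ^ m ∈ monomialSpan K a b :=
  Submodule.subset_span ⟨k, m, hm, hkm, rfl⟩

theorem monomial_one_eq_X_pow_mul_X_pow (s : Fin 2 →₀ ℕ) :
    monomial s (1 : K) = X 0 ^ s 0 * X 1 ^ s 1 := by
  rw [monomial_eq, C_1, one_mul, Finsupp.prod_fintype _ _ (by simp), Fin.prod_univ_two]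

theorem setOf_X_pow_mul_X_pow_eq_image (P : ℕ → ℕ → Prop) :
    {p : MvPolynomial (Fin 2) K | ∃ k m, P k m ∧ p = X 0 ^ k * X 1 ^ m} =
      (fun s => monomial s 1) '' {s | P (s 0) (s 1)} := by
  ext p
  constructor
  · rintro ⟨k, m, h, rfl⟩
    refine ⟨Finsupp.single 0 k + Finsupp.single 1 m, by simpa using h, ?_⟩
    simp [monomial_one_eq_X_pow_mul_X_pow]
  · rintro ⟨s, hs, rfl⟩
    exact ⟨s 0, s 1, hs, monomial_one_eq_X_pow_mul_X_pow s⟩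

end MonomialSpan

section Quotient

variable {K : Type*} [Field K] {a b : ℕ} {I : Ideal (MvPolynomial (Fin 2) K)}

theorem map_mkₐ_monomialSpan_eq_top
    (hI : I = Ideal.span {p | ∃ k m : ℕ, (a < m ∨ b < k + m) ∧ p = X 0 ^ k * X 1 ^ m}) :
    (monomialSpan K a b).map (Ideal.Quotient.mkₐ K I).toLinearMap = ⊤ := by
  rw [eq_top_iff, ← (LinearMap.range_eq_top (f := (Ideal.Quotient.mkₐ K I).toLinearMap)).mpr
      (Ideal.Quotient.mkₐ_surjective K I),
    LinearMap.range_eq_map, ← (basisMonomials (Fin 2) K).span_eq, Submodule.map_span,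
    Submodule.span_le]
  rintro _ ⟨_, ⟨s, rfl⟩, rfl⟩
  rw [coe_basisMonomials]
  dsimp only
  rw [monomial_one_eq_X_pow_mul_X_pow]
  by_cases hs : s 1 ≤ a ∧ s 0 + s 1 ≤ b
  · exact Submodule.mem_map_of_mem (X_pow_mul_X_pow_mem_monomialSpan hs.1 hs.2)
  · have hmem : X 0 ^ s 0 * X 1 ^ s 1 ∈ I := hI ▸ Ideal.subset_span ⟨s 0, s 1, by omega, rfl⟩
    rw [AlgHom.toLinearMap_apply, Ideal.Quotient.mkₐ_eq_mk,
      Ideal.Quotient.eq_zero_iff_mem.mpr hmem]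
    exact zero_mem _

theorem mk_X_pow_ne_zero
    (hI : I = Ideal.span {p | ∃ k m : ℕ, (a < m ∨ b < k + m) ∧ p = X 0 ^ k * X 1 ^ m})
    {k : ℕ} (hk : k ≤ b) : Ideal.Quotient.mk I (X 0 ^ k) ≠ 0 := by
  classical
  rw [Ne, Ideal.Quotient.eq_zero_iff_mem, hI, setOf_X_pow_mul_X_pow_eq_image,
    mem_ideal_span_monomial_image, X_pow_eq_monomial, support_monomial, if_neg one_ne_zero]
  simp only [Finset.mem_singleton, forall_eq, Set.mem_ofPred_eq, not_exists, not_and]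
  intro s hs hle
  have h₀ := hle 0
  have h₁ := hle 1
  simp at h₀ h₁
  omega

theorem mem_intertwiners_xDerivY_add_pderiv {D₁ : Module.End K (MvPolynomial (Fin 2) K ⧸ I)}
    (hD₁ : ∀ k m : ℕ, m ≤ a → k + m ≤ b →
      D₁ (Ideal.Quotient.mk I (X 0 ^ k * X 1 ^ m)) =
        Ideal.Quotient.mk I (pderiv 0 (X 0 ^ k * X 1 ^ m) + X 0 * pderiv 1 (X 0 ^ k * X 1 ^ m))) :
    (xDerivY + ∂ₓ, D₁) ∈
      intertwiners (Ideal.Quotient.mkₐ K I).toLinearMap (monomialSpan K a b) := by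
  refine mem_intertwiners_span ?_
  rintro _ ⟨k, m, hm, hkm, rfl⟩
  refine ⟨?_, (hD₁ k m hm hkm).trans (by rw [add_comm]; rfl)⟩
  rw [LinearMap.add_apply, xDerivY_apply, Derivation.coeFn_coe, pderiv_zero_X_pow_mul_X_pow,
    pderiv_one_X_pow_mul_X_pow, mul_smul_comm, ← mul_assoc, ← pow_succ']
  rcases Nat.eq_zero_or_pos m with rfl | hm₀
  · rw [Nat.cast_zero, zero_smul, zero_add]
    exact Submodule.smul_mem _ _ (X_pow_mul_X_pow_mem_monomialSpan hm (by omega))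
  · exact add_mem
      (Submodule.smul_mem _ _ (X_pow_mul_X_pow_mem_monomialSpan (by omega) (by omega)))
      (Submodule.smul_mem _ _ (X_pow_mul_X_pow_mem_monomialSpan hm (by omega)))

theorem mem_intertwiners_pderiv_one {D₂ : Module.End K (MvPolynomial (Fin 2) K ⧸ I)}
    (hD₂ : ∀ k m : ℕ, m ≤ a → k + m ≤ b →
      D₂ (Ideal.Quotient.mk I (X 0 ^ k * X 1 ^ m)) =
        Ideal.Quotient.mk I (pderiv 1 (X 0 ^ k * X 1 ^ m))) :
    (∂ᵧ, D₂) ∈ intertwiners (Ideal.Quotient.mkₐ K I).toLinearMap (monomialSpan K a b) := by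
  refine mem_intertwiners_span ?_
  rintro _ ⟨k, m, hm, hkm, rfl⟩
  refine ⟨?_, hD₂ k m hm hkm⟩
  rw [Derivation.coeFn_coe, pderiv_one_X_pow_mul_X_pow]
  exact Submodule.smul_mem _ _ (X_pow_mul_X_pow_mem_monomialSpan (by omega) (by omega))

end Quotient

section Operators

variable {K N : Type*} [Field K] [AddCommGroup N] [Module K N] {a b : ℕ}
  {π : MvPolynomial (Fin 2) K →ₗ[K] N} {D₁ D₂ : Module.End K N}

theorem pow_succ_eq_zero_of_mem_intertwiners (hV : (monomialSpan K a b).map π = ⊤)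
    (h₂ : (∂ᵧ, D₂) ∈ intertwiners π (monomialSpan K a b)) : D₂ ^ (a + 1) = 0 := by
  have hmem := pow_mem h₂ (a + 1)
  rw [Prod.pow_mk] at hmem
  refine eq_zero_of_mem_intertwiners hV hmem (Submodule.span_le.mpr ?_)
  rintro _ ⟨k, m, hm, -, rfl⟩
  rw [SetLike.mem_coe, LinearMap.mem_ker, pderiv_one_pow_X_pow_mul_X_pow,
    Nat.descFactorial_eq_zero_iff_lt.mpr (by omega), Nat.cast_zero, zero_smul]

theorem hermiteOp_mul_pow_eq_zero_of_mem_intertwiners (hV : (monomialSpan K a b).map π = ⊤)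
    (h₁ : (xDerivY + ∂ₓ, D₁) ∈ intertwiners π (monomialSpan K a b))
    (h₂ : (∂ᵧ, D₂) ∈ intertwiners π (monomialSpan K a b)) {s : ℕ} :
    hermiteOp D₁ D₂ (b + 1 - s) * D₂ ^ s = 0 := by
  have hmem := mul_mem (hermiteOp_mem h₁ h₂ (b + 1 - s)) (pow_mem h₂ s)
  rw [hermiteOp_prod, Prod.pow_mk, Prod.mk_mul_mk] at hmem
  refine eq_zero_of_mem_intertwiners hV hmem (Submodule.span_le.mpr ?_)
  rintro _ ⟨k, m, -, hkm, rfl⟩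
  rw [SetLike.mem_coe, LinearMap.mem_ker, Module.End.mul_apply, pderiv_one_pow_X_pow_mul_X_pow,
    map_smul, hermiteOp_add_eq_normalOrderedPow pderiv_zero_mul_xDerivY commute_pderiv_one_xDerivY
      commute_pderiv_one_pderiv_zero]
  rcases le_or_gt s m with hsm | hms
  · rw [normalOrderedPow_xDerivY_pderiv_apply_eq_zero (by omega), smul_zero]
  · rw [Nat.descFactorial_eq_zero_iff_lt.mpr hms, Nat.cast_zero, zero_smul]

theorem linearIndependent_pow_mul_pow_of_mem_intertwiners [CharZero K] (hab : a ≤ b)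
    (h₁ : (xDerivY + ∂ₓ, D₁) ∈ intertwiners π (monomialSpan K a b))
    (h₂ : (∂ᵧ, D₂) ∈ intertwiners π (monomialSpan K a b)) (hne : ∀ k ≤ b, π (X 0 ^ k) ≠ 0)
    (l : ℕ) :
    LinearIndependent K
      (fun s : Set.Icc (a - l) a => D₁ ^ (a + b - l - 2 * (s : ℕ)) * D₂ ^ (s : ℕ)) := by
  have happly (M i j : ℕ) (hi : i ≤ a) : (D₁ ^ M * D₂ ^ j) (π (X 0 ^ (b - i) * X 1 ^ i)) =
      (i.descFactorial j : K) • π (((xDerivY + ∂ₓ : Module.End K (MvPolynomial (Fin 2) K)) ^ M)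
        (X 0 ^ (b - i) * X 1 ^ (i - j))) := by
    have hmem := mul_mem (pow_mem h₁ M) (pow_mem h₂ j)
    rw [Prod.pow_mk, Prod.pow_mk, Prod.mk_mul_mk] at hmem
    rw [apply_eq_of_mem_intertwiners hmem (X_pow_mul_X_pow_mem_monomialSpan hi (by omega)),
      Module.End.mul_apply, pderiv_one_pow_X_pow_mul_X_pow, map_smul, map_smul]
  refine linearIndependent_of_apply_eq_zero_of_lt
    (fun i : Set.Icc (a - l) a => LinearMap.applyₗ (π (X 0 ^ (b - i) * X 1 ^ (i : ℕ)))) ?_ ?_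
  · rintro ⟨i, hi⟩ ⟨j, hj⟩ hij
    rw [LinearMap.applyₗ_apply_apply, happly _ _ _ hi.2,
      Nat.descFactorial_eq_zero_iff_lt.mpr (show i < j from hij), Nat.cast_zero, zero_smul]
  · rintro ⟨i, hil, hia⟩
    rw [LinearMap.applyₗ_apply_apply, happly _ _ _ hia, Nat.sub_self, pow_zero, mul_one,
      xDerivY_add_pderiv_pow_X_pow, map_smul, Nat.descFactorial_self]
    refine smul_ne_zero (Nat.cast_ne_zero.mpr i.factorial_ne_zero)
      (smul_ne_zero (Nat.cast_ne_zero.mpr ?_) (hne _ (by omega)))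
    rw [Ne, Nat.descFactorial_eq_zero_iff_lt]
    dsimp only
    omega

end Operators

open MvPolynomial in
theorem stmt_11_general (K : Type*) [Field K] [CharZero K] (a b : ℕ) (hb : 2 * a ≤ b)
    (I : Ideal (MvPolynomial (Fin 2) K))
    (hI : I = Ideal.span {p | ∃ k m : ℕ, (a < m ∨ b < k + m) ∧ p = X 0 ^ k * X 1 ^ m})
    (D1 D2 : Module.End K (MvPolynomial (Fin 2) K ⧸ I))
    (hD1 : ∀ k m : ℕ, m ≤ a → k + m ≤ b →
      D1 (Ideal.Quotient.mk I (X 0 ^ k * X 1 ^ m)) =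
        Ideal.Quotient.mk I (pderiv 0 (X 0 ^ k * X 1 ^ m) + X 0 * pderiv 1 (X 0 ^ k * X 1 ^ m)))
    (hD2 : ∀ k m : ℕ, m ≤ a → k + m ≤ b →
      D2 (Ideal.Quotient.mk I (X 0 ^ k * X 1 ^ m)) =
        Ideal.Quotient.mk I (pderiv 1 (X 0 ^ k * X 1 ^ m))) :
    ∀ l ≤ a,
      Module.finrank K (Submodule.span K
          {E : Module.End K (MvPolynomial (Fin 2) K ⧸ I) |
            ∃ s ≤ a, E = D1 ^ (a + b - l - 2 * s) * D2 ^ s}) = l + 1 ∧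
      LinearIndependent K
        (fun s : Set.Icc (a - l) a => D1 ^ (a + b - l - 2 * (s : ℕ)) * D2 ^ (s : ℕ)) ∧
      Submodule.span K
          (Set.range fun s : Set.Icc (a - l) a => D1 ^ (a + b - l - 2 * (s : ℕ)) * D2 ^ (s : ℕ))
        = Submodule.span K
          {E : Module.End K (MvPolynomial (Fin 2) K ⧸ I) |
            ∃ s ≤ a, E = D1 ^ (a + b - l - 2 * s) * D2 ^ s} := by
  intro l hl
  have hab : a ≤ b := by omega
  have hV := map_mkₐ_monomialSpan_eq_top hI
  have h₁ := mem_intertwiners_xDerivY_add_pderiv hD1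
  have h₂ := mem_intertwiners_pderiv_one hD2
  have hind := linearIndependent_pow_mul_pow_of_mem_intertwiners hab h₁ h₂
    (fun k hk => mk_X_pow_ne_zero hI hk) l
  have hspan : Submodule.span K
      (Set.range fun s : Set.Icc (a - l) a => D1 ^ (a + b - l - 2 * (s : ℕ)) * D2 ^ (s : ℕ)) =
      Submodule.span K {E | ∃ s ≤ a, E = D1 ^ (a + b - l - 2 * s) * D2 ^ s} := by
    refine le_antisymm (Submodule.span_mono ?_) (Submodule.span_le.mpr ?_)
    · rintro _ ⟨s, rfl⟩
      exact ⟨s, s.2.2, rfl⟩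
    · rintro _ ⟨s, -, rfl⟩
      exact pow_mul_pow_mem_span_of_hermiteOp_mul_pow_eq_zero K hab
        (pow_succ_eq_zero_of_mem_intertwiners hV h₂)
        (fun _ _ => hermiteOp_mul_pow_eq_zero_of_mem_intertwiners hV h₁ h₂) s
  refine ⟨?_, hind, hspan⟩
  rw [← hspan, finrank_span_eq_card hind, Fintype.card_ofFinset, Nat.card_Icc]
  omega

/-- On `A_{a,b}` with `b ≥ 2a`, for each `0 ≤ l ≤ a` the span of `{δ_1^{a+b−l−2s} δ_2^s : 0 ≤ s ≤ a}`
has dimension exactly `l+1`, with basis given by the operators for `a−l ≤ s ≤ a`. -/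
theorem stmt_11 (K : Type*) [Field K] [CharZero K] (a b : ℕ) (ha : 1 ≤ a) (hb : 2 * a ≤ b)
    (I : Ideal (MvPolynomial (Fin 2) K))
    (hI : I = Ideal.span {p | ∃ k m : ℕ, (a < m ∨ b < k + m) ∧ p = X 0 ^ k * X 1 ^ m})
    (D1 D2 : Module.End K (MvPolynomial (Fin 2) K ⧸ I))
    (hD1 : ∀ k m : ℕ, m ≤ a → k + m ≤ b →
      D1 (Ideal.Quotient.mk I (X 0 ^ k * X 1 ^ m)) =
        Ideal.Quotient.mk I (pderiv 0 (X 0 ^ k * X 1 ^ m) + X 0 * pderiv 1 (X 0 ^ k * X 1 ^ m)))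
    (hD2 : ∀ k m : ℕ, m ≤ a → k + m ≤ b →
      D2 (Ideal.Quotient.mk I (X 0 ^ k * X 1 ^ m)) =
        Ideal.Quotient.mk I (pderiv 1 (X 0 ^ k * X 1 ^ m))) :
    ∀ l ≤ a,
      Module.finrank K (Submodule.span K
          {E : Module.End K (MvPolynomial (Fin 2) K ⧸ I) |
            ∃ s ≤ a, E = D1 ^ (a + b - l - 2 * s) * D2 ^ s}) = l + 1 ∧
      LinearIndependent K
        (fun s : Set.Icc (a - l) a => D1 ^ (a + b - l - 2 * (s : ℕ)) * D2 ^ (s : ℕ)) ∧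
      Submodule.span K
          (Set.range fun s : Set.Icc (a - l) a => D1 ^ (a + b - l - 2 * (s : ℕ)) * D2 ^ (s : ℕ))
        = Submodule.span K
          {E : Module.End K (MvPolynomial (Fin 2) K ⧸ I) |
            ∃ s ≤ a, E = D1 ^ (a + b - l - 2 * s) * D2 ^ s} :=
  stmt_11_general K a b hb I hI D1 D2 hD1 hD2
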